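/- For nonnegative integer n, positive integer a, and real x, the generalized Bernoulli polynomial satisfies B_n^a(-x) = \sum_{r=0}^{n} C(n+1, r+1) (-1)^r \sum_{l=0}^{n} S(l+ar, ar) (rx)^{n-l} C(n,l) C(l+ar, ar)^{-1}. -/

import Mathlib

open Finset PowerSeries

/-- Stirling numbers of the second kind. -/
def stirling2 : ℕ → ℕ → ℕ
  | 0, 0 => 1
  | 0, _ + 1 => 0
  | _ + 1, 0 => 0
  | n + 1, k + 1 => (k + 1) * stirling2 n (k + 1) + stirling2 n k

/-- Partial Bell polynomial `B_{n,k}(x 1, x 2, ...)`, summing over sequences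
`ℓ` of nonnegative integers with `∑ i * ℓ i = n` and `∑ ℓ i = k`. -/
noncomputable def bellPoly (n k : ℕ) (x : ℕ → ℝ) : ℝ :=
  ∑ ℓ ∈ (Fintype.piFinset fun _ : Fin n => Finset.range (n + 1)).filter
      (fun ℓ => (∑ i, (i.1 + 1) * ℓ i) = n ∧ (∑ i, ℓ i) = k),
    ((n.factorial : ℝ) / ∏ i, ((ℓ i).factorial : ℝ)) *
      ∏ i, (x (i.1 + 1) / ((i.1 + 1).factorial : ℝ)) ^ (ℓ i)

/-- The power series `(e^t - 1)/t`, with constant term `1`. -/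
noncomputable def expm1DivT : PowerSeries ℝ :=
  PowerSeries.mk fun n => 1 / ((n + 1).factorial : ℝ)

/-- The power series `e^{x t}`. -/
noncomputable def expSeries (x : ℝ) : PowerSeries ℝ :=
  PowerSeries.mk fun n => x ^ n / (n.factorial : ℝ)

/-- The generalized Bernoulli polynomial value `B_n^a(-x)`, defined via the
exponential generating function `(t/(e^t-1))^a e^{-x t}`. -/
noncomputable def genBernoulliNeg (a : ℕ) (x : ℝ) (n : ℕ) : ℝ :=
  (n.factorial : ℝ) * PowerSeries.coeff (R := ℝ) n ((expm1DivT ^ a)⁻¹ * expSeries (-x))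

/-! With `G = ((e^t - 1)/t)^a e^{xt}` we have `B_n^a(-x) = n! [t^n] G⁻¹`. As `G` has constant
term `1`, the polynomial identity `1 - (1 - y)^(n+1) = y ∑_r C(n+1, r+1) (-1)^r y^r` at `y = G`
shows that `G⁻¹` and `∑_r C(n+1, r+1) (-1)^r G^r` differ by a multiple of `(1 - G)^(n+1)`,
which is invisible in degree `n`. Each `G^r = ((e^t - 1)/t)^(ar) e^{rxt}` is then expanded using
`(e^t - 1)^m = m! ∑_N S(N, m) t^N / N!`: on coefficients, the differential equation
`d/dt (e^t - 1)^(m+1) = (m+1) ((e^t - 1)^(m+1) + (e^t - 1)^m)` is the Stirling recurrence. -/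

open Nat

theorem one_sub_one_sub_pow_succ {R : Type*} [CommRing R] (y : R) (n : ℕ) :
    1 - (1 - y) ^ (n + 1) =
      y * ∑ r ∈ range (n + 1), ((n + 1).choose (r + 1) * (-1) ^ r : R) * y ^ r := by
  rw [sub_eq_neg_add 1 y, add_pow, sum_range_succ', mul_sum]
  simp only [one_pow, mul_one, pow_zero, choose_zero_right, cast_one, sub_add_cancel_right,
    ← sum_neg_distrib]
  refine sum_congr rfl fun r _ => ?_
  ring

theorem coeff_inv_eq_sum_choose_mul_coeff_pow {k : Type*} [Field k] {G : k⟦X⟧}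
    (hG : constantCoeff G = 1) (n : ℕ) :
    coeff n G⁻¹ =
      ∑ r ∈ range (n + 1), ((n + 1).choose (r + 1) * (-1) ^ r : k) * coeff n (G ^ r) := by
  have hG₀ : constantCoeff G ≠ 0 := by simp [hG]
  have hsplit : G⁻¹ = ∑ r ∈ range (n + 1), ((n + 1).choose (r + 1) * (-1) ^ r : k⟦X⟧) * G ^ r
      + G⁻¹ * (1 - G) ^ (n + 1) := by
    linear_combination G⁻¹ * one_sub_one_sub_pow_succ G n
      + (∑ r ∈ range (n + 1), ((n + 1).choose (r + 1) * (-1) ^ r : k⟦X⟧) * G ^ r)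
        * PowerSeries.inv_mul_cancel G hG₀
  have hdvd : X ^ (n + 1) ∣ G⁻¹ * (1 - G) ^ (n + 1) :=
    dvd_mul_of_dvd_right (pow_dvd_pow_of_dvd (X_dvd_iff.mpr (by simp [hG])) _) _
  rw [hsplit, map_add, X_pow_dvd_iff.mp hdvd n n.lt_succ_self, add_zero, map_sum]
  refine sum_congr rfl fun r _ => ?_
  rw [← coeff_C_mul]
  simp

section ExpSubOnePow

variable {A : Type*} [CommRing A] [Algebra ℚ A]

theorem derivative_exp_sub_one_pow_succ (m : ℕ) :
    d⁄dX A ((exp A - 1) ^ (m + 1)) =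
      ((m + 1 : ℕ) : A⟦X⟧) * ((exp A - 1) ^ (m + 1) + (exp A - 1) ^ m) := by
  rw [derivative_pow, map_sub, derivative_exp, derivative_one, sub_zero, Nat.add_sub_cancel]
  ring

theorem factorial_mul_coeff_exp_sub_one_pow (N m : ℕ) :
    (N ! : A) * coeff N ((exp A - 1) ^ m) = m ! * stirling2 N m := by
  induction N generalizing m with
  | zero => cases m <;> simp [stirling2]
  | succ N ih =>
    cases m with
    | zero => simp [stirling2, coeff_one]
    | succ m =>
      have h := congrArg (coeff N) (derivative_exp_sub_one_pow_succ (A := A) m)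
      rw [coeff_derivative, ← map_natCast (C (R := A)), coeff_C_mul, map_add] at h
      simp only [stirling2, factorial_succ]
      push_cast at h ⊢
      have hfac : ((m + 1)! : A) = (m + 1) * m ! := by push_cast [factorial_succ]; ring
      linear_combination (N ! : A) * h + (m + 1 : A) * ih (m + 1) + (m + 1 : A) * ih m
        + (m + 1 : A) * stirling2 N (m + 1) * hfac

end ExpSubOnePow

theorem X_mul_expm1DivT : X * expm1DivT = exp ℝ - 1 := by
  ext n
  cases n with
  | zero => simp
  | succ n => simp [coeff_succ_X_mul, expm1DivT]

theorem factorial_mul_coeff_expm1DivT_pow (l m : ℕ) :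
    ((l + m) ! : ℝ) * coeff l (expm1DivT ^ m) = m ! * stirling2 (l + m) m := by
  rw [← factorial_mul_coeff_exp_sub_one_pow, ← X_mul_expm1DivT, mul_pow, coeff_X_pow_mul]

theorem constantCoeff_expm1DivT : constantCoeff expm1DivT = 1 := by
  simp [← coeff_zero_eq_constantCoeff_apply, expm1DivT]

theorem expSeries_eq_rescale_exp (x : ℝ) : expSeries x = rescale x (exp ℝ) := by
  ext n
  simp [expSeries, coeff_rescale, div_eq_mul_inv]

theorem constantCoeff_expSeries (x : ℝ) : constantCoeff (expSeries x) = 1 := by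
  simp [← coeff_zero_eq_constantCoeff_apply, expSeries]

theorem expSeries_pow (x : ℝ) (r : ℕ) : expSeries x ^ r = expSeries (r * x) := by
  rw [expSeries_eq_rescale_exp, ← map_pow, exp_pow_eq_rescale_exp, rescale_rescale,
    expSeries_eq_rescale_exp]

theorem expSeries_neg (x : ℝ) : expSeries (-x) = (expSeries x)⁻¹ := by
  rw [PowerSeries.eq_inv_iff_mul_eq_one (by simp [constantCoeff_expSeries]),
    expSeries_eq_rescale_exp, expSeries_eq_rescale_exp, exp_mul_exp_eq_exp_add, neg_add_cancel]
  ext n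
  cases n <;> simp [coeff_one]

theorem factorial_mul_coeff_expm1DivT_pow_mul_expSeries (m n : ℕ) (y : ℝ) :
    (n ! : ℝ) * coeff n (expm1DivT ^ m * expSeries y) =
      ∑ l ∈ range (n + 1), (stirling2 (l + m) m : ℝ) * y ^ (n - l) * (n.choose l : ℝ) *
        ((l + m).choose m : ℝ)⁻¹ := by
  rw [coeff_mul, sum_antidiagonal_eq_sum_range_succ_mk, mul_sum]
  refine sum_congr rfl fun l hl => ?_
  have hln : l ≤ n := mem_range_succ_iff.mp hl
  have hcoeff := factorial_mul_coeff_expm1DivT_pow l m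
  rw [expSeries, coeff_mk, Nat.cast_choose ℝ hln, Nat.cast_choose ℝ (Nat.le_add_left m l),
    Nat.add_sub_cancel]
  field_simp
  linear_combination y ^ (n - l) * hcoeff

theorem genBernoulli_double_sum_general (n a : ℕ) (x : ℝ) :
    genBernoulliNeg a x n =
      ∑ r ∈ Finset.range (n + 1),
        ((n + 1).choose (r + 1) : ℝ) * (-1 : ℝ) ^ r *
          ∑ l ∈ Finset.range (n + 1),
            (stirling2 (l + a * r) (a * r) : ℝ) * ((r : ℝ) * x) ^ (n - l) *
              (n.choose l : ℝ) * ((l + a * r).choose (a * r) : ℝ)⁻¹ := by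
  have hG : constantCoeff (expm1DivT ^ a * expSeries x) = 1 := by
    simp [constantCoeff_expm1DivT, constantCoeff_expSeries]
  rw [genBernoulliNeg, expSeries_neg, ← PowerSeries.mul_inv_rev, mul_comm (expSeries x),
    coeff_inv_eq_sum_choose_mul_coeff_pow hG, mul_sum]
  refine sum_congr rfl fun r _ => ?_
  rw [← factorial_mul_coeff_expm1DivT_pow_mul_expSeries, mul_pow, ← pow_mul, expSeries_pow]
  ring

/-- A double-sum closed form for the generalized Bernoulli polynomial `B_n^a(-x)`. -/
theorem genBernoulli_double_sum (n a : ℕ) (ha : 0 < a) (x : ℝ) :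
    genBernoulliNeg a x n =
      ∑ r ∈ Finset.range (n + 1),
        ((n + 1).choose (r + 1) : ℝ) * (-1 : ℝ) ^ r *
          ∑ l ∈ Finset.range (n + 1),
            (stirling2 (l + a * r) (a * r) : ℝ) * ((r : ℝ) * x) ^ (n - l) *
              (n.choose l : ℝ) * ((l + a * r).choose (a * r) : ℝ)⁻¹ :=
  genBernoulli_double_sum_general n a x
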